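/- Let k ≥ 2. Suppose A₁, A₂, A₃ are pairwise distinct finite sets of cardinality k+1 and B₁, B₂, B₃ are pairwise distinct finite sets of cardinality k such that B₁ ⊆ A₂ ∩ A₃, B₂ ⊆ A₁ ∩ A₃, and B₃ ⊆ A₁ ∩ A₂. Then A₁ ∩ A₂ ∩ A₃ = B₂ ∩ B₃ and this set has cardinality k−1. -/
import Mathlib


theorem stmt_1 {α : Type*} [DecidableEq α] (k : ℕ) (hk : 2 ≤ k)
    (A₁ A₂ A₃ B₁ B₂ B₃ : Finset α)
    (hA12 : A₁ ≠ A₂) (hA13 : A₁ ≠ A₃) (hA23 : A₂ ≠ A₃)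
    (hB12 : B₁ ≠ B₂) (hB13 : B₁ ≠ B₃) (hB23 : B₂ ≠ B₃)
    (hA1 : A₁.card = k + 1) (hA2 : A₂.card = k + 1) (hA3 : A₃.card = k + 1)
    (hB1 : B₁.card = k) (hB2 : B₂.card = k) (hB3 : B₃.card = k)
    (h1 : B₁ ⊆ A₂ ∩ A₃) (h2 : B₂ ⊆ A₁ ∩ A₃) (h3 : B₃ ⊆ A₁ ∩ A₂) :
    A₁ ∩ A₂ ∩ A₃ = B₂ ∩ B₃ ∧ (A₁ ∩ A₂ ∩ A₃).card = k - 1 := by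
  -- A₁ ∩ A₂ has card ≤ k
  have hc12 : (A₁ ∩ A₂).card ≤ k := by
    by_contra h
    push_neg at h
    have hle : A₁.card ≤ (A₁ ∩ A₂).card := by omega
    have := Finset.eq_of_subset_of_card_le Finset.inter_subset_left hle
    have : A₁ ⊆ A₂ := by rw [← this]; exact Finset.inter_subset_right
    exact hA12 (Finset.eq_of_subset_of_card_le this (by omega))
  have hc13 : (A₁ ∩ A₃).card ≤ k := by
    by_contra h
    push_neg at h
    have hle : A₁.card ≤ (A₁ ∩ A₃).card := by omega
    have := Finset.eq_of_subset_of_card_le Finset.inter_subset_left hle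
    have : A₁ ⊆ A₃ := by rw [← this]; exact Finset.inter_subset_right
    exact hA13 (Finset.eq_of_subset_of_card_le this (by omega))
  have e12 : A₁ ∩ A₂ = B₃ := (Finset.eq_of_subset_of_card_le h3 (by omega)).symm
  have e13 : A₁ ∩ A₃ = B₂ := (Finset.eq_of_subset_of_card_le h2 (by omega)).symm
  have heq : A₁ ∩ A₂ ∩ A₃ = B₂ ∩ B₃ := by
    rw [← e12, ← e13]
    ext x; simp; tauto
  refine ⟨heq, ?_⟩
  rw [heq]
  have hu : (B₂ ∪ B₃).card ≤ k + 1 := by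
    rw [← hA1]
    apply Finset.card_le_card
    apply Finset.union_subset
    · exact h2.trans Finset.inter_subset_left
    · exact h3.trans Finset.inter_subset_left
  have hne : B₂ ∪ B₃ ≠ B₂ := fun h => hB23 (Finset.eq_of_subset_of_card_le
    (h ▸ Finset.subset_union_right) (by omega)).symm
  have hul : k + 1 ≤ (B₂ ∪ B₃).card := by
    rcases lt_or_eq_of_le (Finset.card_le_card (Finset.subset_union_left : B₂ ⊆ B₂ ∪ B₃)) with h | h
    · omega
    · exact absurd (Finset.eq_of_subset_of_card_le Finset.subset_union_left h.ge).symm hne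
  have := Finset.card_union_add_card_inter B₂ B₃
  omega
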